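/- Let (ρ, u, p) be bounded functions on Ω×(0,T) with ρ ≥ C > 0, satisfying the jump conditions across an oriented space-time Lipschitz hypersurface with space-time normal (n_x, n_t): (i) u⁺·n_x = u⁻·n_x; (ii) ρ⁺(u⁺·n_x + n_t) = ρ⁻(u⁻·n_x + n_t); (iii) ρ⁺u⁺(u⁺·n_x) + p⁺n_x + ρ⁺u⁺n_t = ρ⁻u⁻(u⁻·n_x) + p⁻n_x + ρ⁻u⁻n_t. Then the energy flux is continuous: ρ⁺(u⁺·n_x + n_t)|u⁺|²/2 + (u⁺·n_x)p⁺ = ρ⁻(u⁻·n_x + n_t)|u⁻|²/2 + (u⁻·n_x)p⁻. -/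
import Mathlib


open scoped RealInnerProductSpace

/-- the Rankine–Hugoniot conditions for the inhomogeneous incompressible
Euler system — (i) continuity of the normal velocity, (ii) mass conservation,
(iii) momentum conservation across a space-time hypersurface with unit normal
`(n_x, n_t)` — imply continuity of the energy flux across the hypersurface. -/
theorem energy_flux_continuous_across_hypersurface
    (d : ℕ) (nx : EuclideanSpace ℝ (Fin d)) (nt : ℝ)
    (hnorm : ‖nx‖ ^ 2 + nt ^ 2 = 1)
    (up um : EuclideanSpace ℝ (Fin d)) (rp rm pp pm : ℝ)
    (hrp : 0 < rp) (hrm : 0 < rm)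
    (h1 : ⟪up, nx⟫ = ⟪um, nx⟫)
    (h2 : rp * (⟪up, nx⟫ + nt) = rm * (⟪um, nx⟫ + nt))
    (h3 : (rp * ⟪up, nx⟫) • up + pp • nx + (rp * nt) • up
        = (rm * ⟪um, nx⟫) • um + pm • nx + (rm * nt) • um) :
    rp * (⟪up, nx⟫ + nt) * (‖up‖ ^ 2 / 2) + ⟪up, nx⟫ * pp
      = rm * (⟪um, nx⟫ + nt) * (‖um‖ ^ 2 / 2) + ⟪um, nx⟫ * pm := by
  have h3' : (rp * (⟪up, nx⟫ + nt)) • up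
      = (rm * (⟪um, nx⟫ + nt)) • um + (pm - pp) • nx := by
    linear_combination (norm := module) h3
  have key := congrArg (fun v => ⟪v, up + um⟫) h3'
  simp only [inner_add_left, inner_add_right, real_inner_smul_left,
    real_inner_self_eq_norm_sq, real_inner_comm um up] at key
  rw [real_inner_comm up nx, real_inner_comm um nx] at key; rw [h1] at key h2 ⊢
  linear_combination key / 2 - (⟪um, up⟫ / 2) * h2
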